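/- arXiv:1012.0623 — 4 statements merged into one kernel-verified Lean document; each statement's English description precedes it below -/
import Mathlib

section
/- Every convex graph invariant f : Sⁿ → ℝ can be expressed as a pointwise supremum of shifted elementary convex graph invariants: there exist a set 𝒫 ⊆ Sⁿ and reals α_P such that f(A) = sup_{P ∈ 𝒫} (Θ_P(A) − α_P) for all A ∈ Sⁿ. -/
/-!
Each closed convex function is the supremum of its continuous affine minorants
`B ↦ tr(P B) - c`. If `f` is moreover permutation invariant, such a minorant stays below `f` after
maximizing over the conjugates `Π B Πᵀ`, i.e. `Θ_P - c ≤ f`; since `Θ_P B ≥ tr(P B)`,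
these elementary minorants still reach `f` from below at every point. Taking for `α_P` the
least admissible shift `sup_B (Θ_P B - f B)` gives the representation.
-/

open Matrix

noncomputable def permConj {n : ℕ} (σ : Equiv.Perm (Fin n))
    (A : Matrix (Fin n) (Fin n) ℝ) : Matrix (Fin n) (Fin n) ℝ :=
  (σ.permMatrix ℝ) * A * (σ.permMatrix ℝ)ᵀ

/-- The elementary convex graph invariant `Θ_P(A) = max_Π tr(P Π A Πᵀ)`. -/
noncomputable def theta {n : ℕ} (P A : Matrix (Fin n) (Fin n) ℝ) : ℝ :=
  (Finset.univ : Finset (Equiv.Perm (Fin n))).sup' Finset.univ_nonempty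
    (fun σ => (P * permConj σ A).trace)

theorem Matrix.exists_trace_mul_eq {n R : Type*} [Fintype n] [DecidableEq n] [CommSemiring R]
    (L : Matrix n n R →ₗ[R] R) : ∃ P : Matrix n n R, ∀ B, (P * B).trace = L B := by
  refine ⟨of fun j i => L (single i j 1), fun B => ?_⟩
  have : traceLinearMap n R R ∘ₗ LinearMap.mulLeft R (of fun j i => L (single i j 1)) = L := by
    refine Matrix.ext_linearMap R fun i j => LinearMap.ext_ring ?_
    simp [trace_mul_single]
  exact LinearMap.congr_fun this B

theorem Matrix.isClosed_setOf_isSymm {n α : Type*} [TopologicalSpace α] [T2Space α] :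
    IsClosed {A : Matrix n n α | A.IsSymm} :=
  isClosed_eq continuous_id.matrix_transpose continuous_id

instance Matrix.instLocallyConvexSpaceReal {m n : Type*} [Fintype m] [Fintype n] :
    LocallyConvexSpace ℝ (Matrix m n ℝ) :=
  letI := Matrix.normedAddCommGroup (m := m) (n := n) (α := ℝ)
  letI := Matrix.normedSpace (m := m) (n := n) (R := ℝ) (α := ℝ)
  NormedSpace.toLocallyConvexSpace

variable {n : ℕ}

lemma permConj_one (A : Matrix (Fin n) (Fin n) ℝ) : permConj 1 A = A := by
  simp [permConj, Equiv.Perm.permMatrix, Equiv.Perm.one_def, PEquiv.toMatrix_refl]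

lemma Matrix.IsSymm.permConj {A : Matrix (Fin n) (Fin n) ℝ} (hA : A.IsSymm)
    (σ : Equiv.Perm (Fin n)) : (permConj σ A).IsSymm := by
  rw [_root_.permConj, IsSymm, transpose_mul, transpose_mul, transpose_transpose, hA.eq,
    mul_assoc]

lemma trace_mul_le_theta (P A : Matrix (Fin n) (Fin n) ℝ) : (P * A).trace ≤ theta P A := by
  have h := Finset.le_sup' (fun σ => (P * permConj σ A).trace) (Finset.mem_univ 1)
  rwa [permConj_one] at h

lemma theta_sub_le_of_trace_mul_sub_le {f : Matrix (Fin n) (Fin n) ℝ → ℝ}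
    (hinv : ∀ A : Matrix (Fin n) (Fin n) ℝ, A.IsSymm → ∀ σ, f (permConj σ A) = f A)
    {P : Matrix (Fin n) (Fin n) ℝ} {c : ℝ}
    (hP : ∀ B : Matrix (Fin n) (Fin n) ℝ, B.IsSymm → (P * B).trace - c ≤ f B)
    {B : Matrix (Fin n) (Fin n) ℝ} (hB : B.IsSymm) : theta P B - c ≤ f B := by
  rw [sub_le_iff_le_add]
  refine Finset.sup'_le _ _ fun σ _ => ?_
  rw [← sub_le_iff_le_add, ← hinv B hB σ]
  exact hP _ (hB.permConj σ)

lemma ConvexOn.exists_theta_sub_le_of_lt {f : Matrix (Fin n) (Fin n) ℝ → ℝ}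
    (hconv : ConvexOn ℝ {A : Matrix (Fin n) (Fin n) ℝ | A.IsSymm} f)
    (hinv : ∀ A : Matrix (Fin n) (Fin n) ℝ, A.IsSymm → ∀ σ, f (permConj σ A) = f A)
    (hlsc : LowerSemicontinuousOn f {A : Matrix (Fin n) (Fin n) ℝ | A.IsSymm})
    {A : Matrix (Fin n) (Fin n) ℝ} (hA : A.IsSymm) {a : ℝ} (ha : a < f A) :
    ∃ (P : Matrix (Fin n) (Fin n) ℝ) (c : ℝ),
      (∀ B : Matrix (Fin n) (Fin n) ℝ, B.IsSymm → theta P B - c ≤ f B) ∧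
        a ≤ theta P A - c := by
  obtain ⟨l, c, hle, hlA⟩ := hconv.exists_affine_le_of_lt (𝕜 := ℝ) (s := {A | A.IsSymm})
    hA ha isClosed_setOf_isSymm hlsc
  obtain ⟨P, hP⟩ := exists_trace_mul_eq l.toLinearMap
  have hminor : ∀ B : Matrix (Fin n) (Fin n) ℝ, B.IsSymm → (P * B).trace - -c ≤ f B :=
    fun B hB => by simpa [hP, sub_neg_eq_add] using hle ⟨B, hB⟩
  refine ⟨P, -c, fun B hB => theta_sub_le_of_trace_mul_sub_le hinv hminor hB, ?_⟩
  have hPA : (P * A).trace - -c = a := by simpa [hP] using hlA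
  linarith [trace_mul_le_theta P A]

theorem stmt1 (n : ℕ) (f : Matrix (Fin n) (Fin n) ℝ → ℝ)
    (hconv : ConvexOn ℝ {A : Matrix (Fin n) (Fin n) ℝ | A.IsSymm} f)
    (hinv : ∀ (A : Matrix (Fin n) (Fin n) ℝ), A.IsSymm →
      ∀ σ : Equiv.Perm (Fin n), f (permConj σ A) = f A)
    (hlsc : LowerSemicontinuousOn f {A : Matrix (Fin n) (Fin n) ℝ | A.IsSymm}) :
    ∃ (Ps : Set (Matrix (Fin n) (Fin n) ℝ)) (α : Matrix (Fin n) (Fin n) ℝ → ℝ),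
      ∀ A : Matrix (Fin n) (Fin n) ℝ, A.IsSymm →
        IsLUB {t : ℝ | ∃ P ∈ Ps, t = theta P A - α P} (f A) := by
  set gap : Matrix (Fin n) (Fin n) ℝ → Set ℝ :=
    fun P => (fun B => theta P B - f B) '' {A | A.IsSymm}
  refine ⟨{P | BddAbove (gap P)}, fun P => sSup (gap P), fun A hA => ⟨?_, fun b hb => ?_⟩⟩
  · rintro _ ⟨P, hP, rfl⟩
    linarith [le_csSup hP ⟨A, hA, rfl⟩]
  · refine le_of_forall_lt_imp_le_of_dense fun a ha => ?_
    obtain ⟨P, c, hminor, haP⟩ := hconv.exists_theta_sub_le_of_lt hinv hlsc hA ha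
    have hgap : ∀ t ∈ gap P, t ≤ c := by
      rintro _ ⟨B, hB, rfl⟩
      linarith [hminor B hB]
    have hsup : sSup (gap P) ≤ c := csSup_le ⟨_, A, hA, rfl⟩ hgap
    linarith [hb ⟨P, ⟨c, hgap⟩, rfl⟩]
end

section
/- Let C₁, C₂ ⊆ Sⁿ be convex sets with A₁* ∈ C₁ and A₂* ∈ C₂, and let A = A₁* + A₂*. The pair (A₁*, A₂*) is the unique minimizer of ‖A − A₁ − A₂‖ over (A₁, A₂) ∈ C₁ × C₂ if and only if T_{C₁}(A₁*) ∩ (−T_{C₂}(A₂*)) = {0}, where T_C(x) denotes the tangent cone of C at x. -/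
open Matrix

attribute [local instance] Matrix.frobeniusNormedAddCommGroup Matrix.frobeniusNormedSpace

/-- The tangent cone at `x` with respect to a convex set `C`:
`T_C(x) = {α (y − x) : y ∈ C, α ≥ 0}`. -/
def tangentCone' {n : ℕ} (C : Set (Matrix (Fin n) (Fin n) ℝ))
    (x : Matrix (Fin n) (Fin n) ℝ) : Set (Matrix (Fin n) (Fin n) ℝ) :=
  {z | ∃ α : ℝ, 0 ≤ α ∧ ∃ y ∈ C, z = α • (y - x)}

theorem stmt7 (n : ℕ) (C₁ C₂ : Set (Matrix (Fin n) (Fin n) ℝ))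
    (hC₁ : Convex ℝ C₁) (hC₂ : Convex ℝ C₂)
    (hC₁symm : ∀ B ∈ C₁, B.IsSymm) (hC₂symm : ∀ B ∈ C₂, B.IsSymm)
    (A₁' A₂' : Matrix (Fin n) (Fin n) ℝ) (hA₁ : A₁' ∈ C₁) (hA₂ : A₂' ∈ C₂)
    (A : Matrix (Fin n) (Fin n) ℝ) (hA : A = A₁' + A₂') :
    (∀ B₁ ∈ C₁, ∀ B₂ ∈ C₂,
        ‖A - B₁ - B₂‖ ≤ ‖A - A₁' - A₂'‖ → B₁ = A₁' ∧ B₂ = A₂') ↔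
      tangentCone' C₁ A₁' ∩ (-(tangentCone' C₂ A₂')) = {0} := by
  subst hA
  constructor
  · intro h
    ext z
    simp only [Set.mem_inter_iff, Set.mem_neg, Set.mem_singleton_iff]
    constructor
    · rintro ⟨⟨α, hα, y₁, hy₁, hz₁⟩, β, hβ, y₂, hy₂, hz₂⟩
      rcases eq_or_lt_of_le hα with hα0 | hαpos
      · rw [hz₁, ← hα0, zero_smul]
      rcases eq_or_lt_of_le hβ with hβ0 | hβpos
      · have : -z = 0 := by rw [hz₂, ← hβ0, zero_smul]
        simpa using this
      set c := min α⁻¹ β⁻¹ with hc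
      have hcpos : (0 : ℝ) < c := lt_min (inv_pos.2 hαpos) (inv_pos.2 hβpos)
      have ht1 : c * α ≤ 1 := by
        calc c * α ≤ α⁻¹ * α := by gcongr; exact min_le_left _ _
        _ = 1 := inv_mul_cancel₀ hαpos.ne'
      have hs1 : c * β ≤ 1 := by
        calc c * β ≤ β⁻¹ * β := by gcongr; exact min_le_right _ _
        _ = 1 := inv_mul_cancel₀ hβpos.ne'
      have ht0 : 0 ≤ c * α := le_of_lt (mul_pos hcpos hαpos)
      have hs0 : 0 ≤ c * β := le_of_lt (mul_pos hcpos hβpos)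
      have hB₁ : (1 - c * α) • A₁' + (c * α) • y₁ ∈ C₁ :=
        hC₁ hA₁ hy₁ (by linarith) ht0 (by ring)
      have hB₂ : (1 - c * β) • A₂' + (c * β) • y₂ ∈ C₂ :=
        hC₂ hA₂ hy₂ (by linarith) hs0 (by ring)
      have key₁ : (1 - c * α) • A₁' + (c * α) • y₁ = A₁' + c • z := by
        rw [hz₁]; module
      have key₂ : (1 - c * β) • A₂' + (c * β) • y₂ = A₂' - c • z := by
        have : β • (y₂ - A₂') = -z := hz₂.symm
        rw [show (c * β) • y₂ = c • (β • (y₂ - A₂')) + (c*β) • A₂' by module, this]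
        module
      rw [key₁] at hB₁
      rw [key₂] at hB₂
      have hsum : (A₁' + A₂') - (A₁' + c • z) - (A₂' - c • z) = 0 := by abel
      have := h _ hB₁ _ hB₂ (by rw [hsum, show A₁' + A₂' - A₁' - A₂' = (0 : Matrix (Fin n) (Fin n) ℝ) by abel])
      have h0 : A₁' + c • z = A₁' := this.1
      have : c • z = 0 := by
        have := congrArg (fun M => M - A₁') h0
        simpa using this
      rcases smul_eq_zero.mp this with hc0 | hz0
      · exact absurd hc0 hcpos.ne'
      · exact hz0
    · rintro rfl
      refine ⟨⟨0, le_refl 0, A₁', hA₁, by simp⟩, 0, le_refl 0, A₂', hA₂, by simp⟩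
  · intro h B₁ hB₁ B₂ hB₂ hle
    have h0 : (A₁' + A₂') - B₁ - B₂ = 0 := by
      have h1 : (A₁' + A₂') - A₁' - A₂' = 0 := by abel
      rw [h1, norm_zero] at hle
      exact norm_le_zero_iff.mp hle
    have hneg : -(B₁ - A₁') = B₂ - A₂' := by
      have := congrArg (fun M => M - A₂' + B₂ - A₁') h0
      have : B₂ - A₂' = A₁' - B₁ := by
        have := h0
        have : B₂ = A₁' + A₂' - B₁ - 0 := by rw [← h0]; abel
        rw [this]; abel
      rw [this]; abel
    have hmem : B₁ - A₁' ∈ tangentCone' C₁ A₁' ∩ (-(tangentCone' C₂ A₂')) := by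
      refine ⟨⟨1, zero_le_one, B₁, hB₁, by simp⟩, ?_⟩
      rw [Set.mem_neg]
      exact ⟨1, zero_le_one, B₂, hB₂, by rw [hneg, one_smul]⟩
    rw [h] at hmem
    have hB1 : B₁ = A₁' := by
      have : B₁ - A₁' = 0 := hmem
      have := congrArg (fun M => M + A₁') this
      simpa using this
    refine ⟨hB1, ?_⟩
    have : B₂ - A₂' = 0 := by rw [← hneg, hB1]; simp
    have := congrArg (fun M => M + A₂') this
    simpa using this
end

section
/- For any vector d ∈ ℝⁿ, the convex hull of the set of its permutations, conv{Π d : Π ∈ Sym(n)} (the permutahedron of d), equals the set of vectors majorized by d: {x ∈ ℝⁿ : Σᵢ xᵢ = Σᵢ dᵢ and Σ_{i=1}^k (x̄)ᵢ ≤ Σ_{i=1}^k (d̄)ᵢ for all k = 1,…,n−1}, where x̄ denotes x sorted in descending order. -/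
/-- The entries of `x` sorted in descending order. -/
noncomputable def sortDesc {n : ℕ} (x : Fin n → ℝ) : Fin n → ℝ :=
  fun i => (x ∘ Tuple.sort x) i.rev

/-- The sum of the `k` largest entries of `x`. -/
noncomputable def topSum {n : ℕ} (k : ℕ) (x : Fin n → ℝ) : ℝ :=
  ∑ i : Fin n, if (i : ℕ) < k then sortDesc x i else 0

/-!
The sum of the `k` largest entries of `x` is the largest sum of `x` over a `k`-element index
set, so it is convex and invariant under permutations; hence the majorized vectors form a convex
set containing every `d ∘ σ`. Conversely, if a majorized `x` were outside the hull, some linear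
functional `c` would separate it from all `d ∘ σ`. Reindexing so that `c` decreases, summation by
parts writes `∑ cᵢ xᵢ` as a nonnegative combination of the prefix sums of `x` (plus a multiple
of the total sum); each prefix sum is at most the corresponding top sum of `x`, hence of `d`, so
`∑ cᵢ xᵢ ≤ ∑ cᵢ (d ∘ σ)ᵢ` for the `σ` that orders `d` like `c`.
-/

open Finset

theorem Finset.sum_le_sum_of_card_eq_of_forall_le {ι M : Type*} [AddCommMonoid M] [LinearOrder M]
    [IsOrderedAddMonoid M] {s t : Finset ι} {f : ι → M} (hst : #s = #t)
    (h : ∀ i ∈ s, ∀ j ∈ t, f i ≤ f j) : ∑ i ∈ s, f i ≤ ∑ j ∈ t, f j := by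
  obtain rfl | ht := t.eq_empty_or_nonempty
  · simp_all
  calc ∑ i ∈ s, f i ≤ #s • t.inf' ht f :=
        sum_le_card_nsmul _ _ _ fun i hi => le_inf' _ _ fun j hj => h i hi j hj
    _ = #t • t.inf' ht f := by rw [hst]
    _ ≤ ∑ j ∈ t, f j := card_nsmul_le_sum _ _ _ fun j hj => inf'_le _ hj

theorem mem_convexHull_of_forall_exists_le {E : Type*} [AddCommGroup E] [Module ℝ E]
    [TopologicalSpace E] [IsTopologicalAddGroup E] [ContinuousSMul ℝ E]
    [LocallyConvexSpace ℝ E] [T2Space E] {s : Set E} (hs : s.Finite) {x : E}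
    (h : ∀ f : StrongDual ℝ E, ∃ y ∈ s, f x ≤ f y) :
    x ∈ convexHull ℝ s := by
  by_contra hx
  obtain ⟨f, u, hfs, hfx⟩ := geometric_hahn_banach_closed_point (convex_convexHull ℝ s)
    (hs.isCompact_convexHull ℝ).isClosed hx
  obtain ⟨y, hy, hxy⟩ := h f
  exact (hfs y (subset_convexHull ℝ s hy)).not_ge (hfx.le.trans hxy)

theorem StrongDual.apply_eq_sum_mul {ι : Type*} [Fintype ι] [DecidableEq ι]
    (f : StrongDual ℝ (ι → ℝ)) (x : ι → ℝ) : f x = ∑ i, f (Pi.single i 1) * x i := by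
  conv_lhs => rw [← univ_sum_single x]
  refine (map_sum f _ _).trans (sum_congr rfl fun i _ => ?_)
  rw [mul_comm, ← smul_eq_mul, ← map_smul, ← Pi.single_smul', smul_eq_mul, mul_one]

variable {n : ℕ}

theorem sum_range_mul_nonpos_of_antitone {a w : ℕ → ℝ}
    (ha : ∀ i, i + 1 < n → a (i + 1) ≤ a i)
    (hw : ∀ k, 0 < k → k < n → ∑ i ∈ range k, w i ≤ 0)
    (htot : ∑ i ∈ range n, w i = 0) :
    ∑ i ∈ range n, a i * w i ≤ 0 := by
  have hparts := sum_range_by_parts a w n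
  simp only [smul_eq_mul] at hparts
  rw [hparts, htot, mul_zero, zero_sub, neg_nonpos]
  refine sum_nonneg fun i hi => ?_
  have hin := mem_range.1 hi
  exact mul_nonneg_of_nonpos_of_nonpos (sub_nonpos.2 (ha i (by omega)))
    (hw (i + 1) i.succ_pos (by omega))

theorem Fin.sum_filter_val_lt {M : Type*} [AddCommMonoid M] (f : ℕ → M) {k : ℕ}
    (hk : k ≤ n) :
    ∑ i ∈ {i : Fin n | ↑i < k}, f i = ∑ i ∈ range k, f i := by
  refine (sum_map _ Fin.valEmbedding f).symm.trans (congrArg (Finset.sum · f) ?_)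
  ext j
  simp only [mem_map, mem_filter, mem_univ, true_and, Fin.valEmbedding_apply, mem_range]
  exact ⟨fun ⟨i, hi, hij⟩ => hij ▸ hi, fun hj => ⟨⟨j, by omega⟩, hj, rfl⟩⟩

theorem Antitone.sum_mul_le_sum_mul_of_prefix_sum_le {a y z : Fin n → ℝ} (ha : Antitone a)
    (hsum : ∑ i, y i = ∑ i, z i)
    (hprefix : ∀ k, 0 < k → k < n →
      ∑ i ∈ {i : Fin n | ↑i < k}, y i ≤ ∑ i ∈ {i : Fin n | ↑i < k}, z i) :
    ∑ i, a i * y i ≤ ∑ i, a i * z i := by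
  set a' : ℕ → ℝ := Function.extend Fin.val a 0
  set w : ℕ → ℝ := Function.extend Fin.val (y - z) 0
  have ha' (i : Fin n) : a' i = a i := Fin.val_injective.extend_apply _ _ _
  have hw (i : Fin n) : w i = y i - z i := Fin.val_injective.extend_apply _ _ _
  have hprefix' {k : ℕ} (hk : k ≤ n) :
      ∑ i ∈ range k, w i =
        ∑ i ∈ {i : Fin n | ↑i < k}, y i - ∑ i ∈ {i : Fin n | ↑i < k}, z i := by
    simp only [← Fin.sum_filter_val_lt _ hk, hw, sum_sub_distrib]
  suffices ∑ i ∈ range n, a' i * w i ≤ 0 by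
    simpa [← Fin.sum_univ_eq_sum_range, ha', hw, mul_sub] using this
  refine sum_range_mul_nonpos_of_antitone (fun i hi => ?_) (fun k hk hkn => ?_) ?_
  · have hai := ha (Fin.le_def.2 i.le_succ : (⟨i, by omega⟩ : Fin n) ≤ ⟨i + 1, hi⟩)
    rwa [← ha', ← ha'] at hai
  · rw [hprefix' hkn.le, sub_nonpos]
    exact hprefix k hk hkn
  · rw [hprefix' le_rfl]
    simpa using sub_eq_zero.2 hsum

noncomputable def sortDescPerm (x : Fin n → ℝ) : Equiv.Perm (Fin n) :=
  Fin.revPerm.trans (Tuple.sort x)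

theorem sortDesc_eq_comp (x : Fin n → ℝ) : sortDesc x = x ∘ sortDescPerm x := rfl

theorem antitone_sortDesc (x : Fin n → ℝ) : Antitone (sortDesc x) :=
  fun _ _ hij => Tuple.monotone_sort x (Fin.rev_le_rev.2 hij)

theorem topSum_eq_sum_filter (k : ℕ) (x : Fin n → ℝ) :
    topSum k x = ∑ i ∈ {i : Fin n | ↑i < k}, sortDesc x i :=
  (sum_filter _ _).symm

noncomputable def topSet (k : ℕ) (x : Fin n → ℝ) : Finset (Fin n) :=
  ({i : Fin n | ↑i < k} : Finset (Fin n)).map (sortDescPerm x).toEmbedding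

theorem sum_topSet (k : ℕ) (x : Fin n → ℝ) : ∑ i ∈ topSet k x, x i = topSum k x := by
  rw [topSet, sum_map, topSum_eq_sum_filter, sortDesc_eq_comp]
  rfl

theorem card_topSet {k : ℕ} (hk : k ≤ n) (x : Fin n → ℝ) : #(topSet k x) = k := by
  rw [topSet, card_map, Fin.card_filter_val_lt, min_eq_right hk]

theorem mem_topSet {k : ℕ} {x : Fin n → ℝ} {i : Fin n} :
    i ∈ topSet k x ↔ ((sortDescPerm x).symm i : ℕ) < k := by
  simp [topSet]

theorem le_of_mem_topSet_of_notMem {k : ℕ} {x : Fin n → ℝ} {i j : Fin n}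
    (hi : i ∈ topSet k x) (hj : j ∉ topSet k x) : x j ≤ x i := by
  rw [mem_topSet] at hi hj
  simpa [sortDesc_eq_comp] using
    antitone_sortDesc x (Fin.le_def.2 (hi.le.trans (not_lt.1 hj)))

theorem sum_le_topSum {k : ℕ} (x : Fin n → ℝ) {A : Finset (Fin n)} (hA : #A = k) :
    ∑ i ∈ A, x i ≤ topSum k x := by
  have hk : k ≤ n := hA ▸ (card_le_univ A).trans_eq (Fintype.card_fin n)
  set T := topSet k x
  rw [← sum_topSet, ← sum_inter_add_sum_sdiff A T, ← sum_inter_add_sum_sdiff T A, inter_comm]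
  gcongr 1
  have hcard : #(A \ T) = #(T \ A) := card_sdiff_comm (hA.trans (card_topSet hk x).symm)
  exact sum_le_sum_of_card_eq_of_forall_le hcard fun i hi j hj =>
    le_of_mem_topSet_of_notMem (mem_sdiff.1 hj).1 (mem_sdiff.1 hi).2

theorem topSum_comp_perm {k : ℕ} (hk : k ≤ n) (x : Fin n → ℝ) (σ : Equiv.Perm (Fin n)) :
    topSum k (x ∘ σ) = topSum k x := by
  have key (x : Fin n → ℝ) (σ : Equiv.Perm (Fin n)) : topSum k (x ∘ σ) ≤ topSum k x := by
    rw [← sum_topSet k (x ∘ σ)]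
    refine (sum_map _ σ.toEmbedding x).symm.trans_le (sum_le_topSum x ?_)
    rw [card_map, card_topSet hk]
  refine (key x σ).antisymm ?_
  simpa [Function.comp_assoc] using key (x ∘ σ) σ.symm

theorem convexOn_topSum {k : ℕ} (hk : k ≤ n) :
    ConvexOn ℝ Set.univ (topSum k : (Fin n → ℝ) → ℝ) := by
  refine ⟨convex_univ, fun x _ y _ a b ha hb _ => ?_⟩
  have hT := card_topSet hk (a • x + b • y)
  rw [← sum_topSet k (a • x + b • y)]
  simp only [Pi.add_apply, Pi.smul_apply, smul_eq_mul, sum_add_distrib, ← mul_sum]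
  gcongr <;> exact sum_le_topSum _ hT

def majorizedSet (d : Fin n → ℝ) : Set (Fin n → ℝ) :=
  {x | (∑ i, x i = ∑ i, d i) ∧
    ∀ k : ℕ, 1 ≤ k → k ≤ n - 1 → topSum k x ≤ topSum k d}

theorem convex_majorizedSet (d : Fin n → ℝ) : Convex ℝ (majorizedSet d) := by
  intro x hx y hy a b ha hb hab
  refine ⟨?_, fun k hk hkn => ?_⟩
  · simp only [Pi.add_apply, Pi.smul_apply, smul_eq_mul, sum_add_distrib, ← mul_sum, hx.1,
      hy.1, ← add_mul, hab, one_mul]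
  calc topSum k (a • x + b • y) ≤ a * topSum k x + b * topSum k y :=
        (convexOn_topSum (by omega)).2 trivial trivial ha hb hab
    _ ≤ a * topSum k d + b * topSum k d := by gcongr; exacts [hx.2 k hk hkn, hy.2 k hk hkn]
    _ = topSum k d := by rw [← add_mul, hab, one_mul]

theorem comp_perm_mem_majorizedSet (d : Fin n → ℝ) (σ : Equiv.Perm (Fin n)) :
    d ∘ σ ∈ majorizedSet d :=
  ⟨Equiv.sum_comp σ d, fun k _ hkn => (topSum_comp_perm (by omega) d σ).le⟩

theorem exists_perm_sum_mul_le {d x : Fin n → ℝ} (hx : x ∈ majorizedSet d)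
    (c : Fin n → ℝ) :
    ∃ σ : Equiv.Perm (Fin n), ∑ i, c i * x i ≤ ∑ i, c i * (d ∘ σ) i := by
  set τ := sortDescPerm c
  refine ⟨τ.symm.trans (sortDescPerm d), ?_⟩
  have hcx : ∑ i, c i * x i = ∑ i, sortDesc c i * x (τ i) :=
    (Equiv.sum_comp τ fun i => c i * x i).symm
  have hcd : ∑ i, c i * (d ∘ τ.symm.trans (sortDescPerm d)) i =
      ∑ i, sortDesc c i * sortDesc d i := by
    rw [← Equiv.sum_comp τ]
    simp [sortDesc_eq_comp, τ]
  rw [hcx, hcd]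
  refine (antitone_sortDesc c).sum_mul_le_sum_mul_of_prefix_sum_le ?_ fun k hk hkn => ?_
  · rw [Equiv.sum_comp τ x, hx.1, ← Equiv.sum_comp (sortDescPerm d) d]
    rfl
  · calc ∑ i ∈ {i : Fin n | ↑i < k}, x (τ i)
        = ∑ i ∈ ({i : Fin n | ↑i < k} : Finset (Fin n)).map τ.toEmbedding, x i :=
          (sum_map _ τ.toEmbedding x).symm
      _ ≤ topSum k x :=
          sum_le_topSum x (by rw [card_map, Fin.card_filter_val_lt, min_eq_right hkn.le])
      _ ≤ topSum k d := hx.2 k hk (by omega)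
      _ = ∑ i ∈ {i : Fin n | ↑i < k}, d (sortDescPerm d i) := topSum_eq_sum_filter k d

theorem majorizedSet_subset_convexHull (d : Fin n → ℝ) :
    majorizedSet d ⊆
      convexHull ℝ {x : Fin n → ℝ | ∃ σ : Equiv.Perm (Fin n), x = d ∘ σ} := by
  intro x hx
  have hfin : {x : Fin n → ℝ | ∃ σ : Equiv.Perm (Fin n), x = d ∘ σ}.Finite :=
    (Set.finite_range fun σ : Equiv.Perm (Fin n) => d ∘ σ).subset
      fun _ ⟨σ, hσ⟩ => ⟨σ, hσ.symm⟩
  refine mem_convexHull_of_forall_exists_le hfin fun f => ?_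
  obtain ⟨σ, hσ⟩ := exists_perm_sum_mul_le hx fun i => f (Pi.single i 1)
  exact ⟨d ∘ σ, ⟨σ, rfl⟩, by simpa only [← StrongDual.apply_eq_sum_mul] using hσ⟩

theorem stmt13 (n : ℕ) (d : Fin n → ℝ) :
    convexHull ℝ {x : Fin n → ℝ | ∃ σ : Equiv.Perm (Fin n), x = d ∘ σ} =
      {x : Fin n → ℝ | (∑ i, x i = ∑ i, d i) ∧
        ∀ k : ℕ, 1 ≤ k → k ≤ n - 1 → topSum k x ≤ topSum k d} := by
  refine (convexHull_min ?_ (convex_majorizedSet d)).antisymm (majorizedSet_subset_convexHull d)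
  rintro _ ⟨σ, rfl⟩
  exact comp_perm_mem_majorizedSet d σ
end

section
/- Every closed convex symmetric function g : ℝⁿ → ℝ can be written as a supremum of shifted monotone linear functionals: g(x) = sup_{v ∈ ℳ} (vᵀ x̄ − α_v), where ℳ = {v ∈ ℝⁿ : v₁ ≥ v₂ ≥ ⋯ ≥ vₙ} is the cone of monotone decreasing vectors and x̄ is the decreasing rearrangement of x. -/
lemma sortDesc_antitone {n : ℕ} (x : Fin n → ℝ) : Antitone (sortDesc x) := by
  intro i j hij
  exact Tuple.monotone_sort x (Fin.rev_le_rev.2 hij)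

lemma sortDesc_perm {n : ℕ} (x : Fin n → ℝ) :
    ∃ σ : Equiv.Perm (Fin n), sortDesc x = x ∘ σ :=
  ⟨(Fin.revPerm).trans (Tuple.sort x), rfl⟩

lemma antitone_monovary {n : ℕ} {f g : Fin n → ℝ} (hf : Antitone f) (hg : Antitone g) :
    Monovary f g := by
  intro i j hij
  rcases le_total j i with h | h
  · exact hf h
  · exact absurd (hg h) (not_le.2 hij)

/-- Rearrangement inequality. -/
lemma sum_mul_le_sortDesc {n : ℕ} (v x : Fin n → ℝ) :
    ∑ i, v i * x i ≤ ∑ i, sortDesc v i * sortDesc x i := by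
  obtain ⟨σ, hσ⟩ := sortDesc_perm v
  obtain ⟨τ, hτ⟩ := sortDesc_perm x
  have key : ∑ i, v i * x i = ∑ i, sortDesc v i * sortDesc x ((σ.trans τ⁻¹) i) := by
    rw [← Equiv.sum_comp σ (fun i => v i * x i)]
    refine Finset.sum_congr rfl fun i _ => ?_
    rw [hσ, hτ]
    simp [Equiv.trans]
  rw [key]
  have h2 := (antitone_monovary (sortDesc_antitone v)
    (sortDesc_antitone x)).sum_smul_comp_perm_le_sum_smul (σ := σ.trans τ⁻¹)
  simp only [smul_eq_mul] at h2
  exact h2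

/-- Existence of ε-subgradient affine minorants for a lsc convex function. -/
lemma exists_minorant {n : ℕ} (g : (Fin n → ℝ) → ℝ)
    (hconv : ConvexOn ℝ Set.univ g) (hlsc : LowerSemicontinuous g)
    (x : Fin n → ℝ) (ε : ℝ) (hε : 0 < ε) :
    ∃ (v : Fin n → ℝ) (β : ℝ), (∀ y, ∑ i, v i * y i - β ≤ g y) ∧
      g x - ε < (∑ i, v i * x i) - β := by
  set t : Set ((Fin n → ℝ) × ℝ) := {p | g p.1 ≤ p.2} with ht
  have htconv : Convex ℝ t := by
    have := hconv.convex_epigraph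
    simpa [ht, Set.setOf_and] using this
  have htclosed : IsClosed t := by
    rw [← isOpen_compl_iff, isOpen_iff_mem_nhds]
    rintro ⟨z, r⟩ hp
    have hp' : r < g z := by
      simpa [ht, not_le] using hp
    obtain ⟨y, hy1, hy2⟩ := exists_between hp'
    have h1 : ∀ᶠ z' in nhds z, y < g z' := hlsc z y hy2
    rw [nhds_prod_eq]
    refine Filter.mem_of_superset (Filter.prod_mem_prod h1 (Iio_mem_nhds hy1)) ?_
    rintro ⟨z', r'⟩ ⟨hq1, hq2⟩
    simp only [ht, Set.mem_compl_iff, Set.mem_setOf_eq, not_le]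
    exact lt_trans hq2 hq1
  have hxt : (x, g x - ε) ∉ t := by
    simp only [ht, Set.mem_setOf_eq]
    linarith
  obtain ⟨f, u, hfu, hft⟩ := geometric_hahn_banach_point_closed htconv htclosed hxt
  set c : ℝ := f (0, 1) with hc
  have hdec : ∀ p : (Fin n → ℝ) × ℝ, f p = f (p.1, 0) + p.2 * c := by
    intro p
    have : p = (p.1, (0 : ℝ)) + p.2 • ((0 : Fin n → ℝ), (1 : ℝ)) := by
      ext <;> simp
    rw [show f p = f ((p.1, (0 : ℝ)) + p.2 • ((0 : Fin n → ℝ), (1 : ℝ))) by rw [← this]]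
    rw [map_add, map_smul, smul_eq_mul]
  have hxmem : (x, g x) ∈ t := by simp [ht]
  have h1 := hft _ hxmem
  rw [hdec] at h1 hfu
  simp only at h1 hfu
  have hcpos : 0 < c := by nlinarith
  -- the linear functional y ↦ f (y, 0)
  set m : (Fin n → ℝ) →ₗ[ℝ] ℝ := f.toLinearMap.comp (LinearMap.inl ℝ _ ℝ) with hm
  have hmy : ∀ y : Fin n → ℝ, m y = f (y, 0) := fun y => rfl
  have hsum : ∀ y : Fin n → ℝ,
      ∑ i, (-(m fun j => if i = j then 1 else 0) / c) * y i = -(m y) / c := by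
    intro y
    rw [LinearMap.pi_apply_eq_sum_univ m y, ← Finset.sum_neg_distrib, Finset.sum_div]
    exact Finset.sum_congr rfl fun i _ => by rw [smul_eq_mul]; ring
  refine ⟨fun i => -(m fun j => if i = j then 1 else 0) / c, -u / c, ?_, ?_⟩
  · intro y
    rw [hsum y]
    have hyt : (y, g y) ∈ t := by simp [ht]
    have h2 := hft _ hyt
    rw [hdec] at h2
    simp only at h2
    rw [← hmy] at h2
    rw [div_sub_div_same, div_le_iff₀ hcpos]
    linarith
  · rw [hsum x]
    rw [← hmy] at hfu
    rw [div_sub_div_same, lt_div_iff₀ hcpos]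
    nlinarith

theorem stmt15 (n : ℕ) (g : (Fin n → ℝ) → ℝ)
    (hconv : ConvexOn ℝ Set.univ g)
    (hsym : ∀ (x : Fin n → ℝ) (σ : Equiv.Perm (Fin n)), g (x ∘ σ) = g x)
    (hlsc : LowerSemicontinuous g) :
    ∃ (V : Set (Fin n → ℝ)) (α : (Fin n → ℝ) → ℝ),
      V ⊆ {v : Fin n → ℝ | ∀ i j : Fin n, i ≤ j → v j ≤ v i} ∧
      ∀ x : Fin n → ℝ,
        IsLUB {t : ℝ | ∃ v ∈ V, t = (∑ i, v i * sortDesc x i) - α v} (g x) := by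
  classical
  set F : (Fin n → ℝ) → (Fin n → ℝ) → ℝ :=
    fun w y => (∑ i, w i * sortDesc y i) - g y with hF
  refine ⟨{w | Antitone w ∧ BddAbove (Set.range (F w))},
    fun w => sSup (Set.range (F w)), fun w hw i j hij => hw.1 hij, fun x => ?_⟩
  constructor
  · -- upper bound
    rintro t ⟨w, ⟨-, hbdd⟩, rfl⟩
    have : F w x ≤ sSup (Set.range (F w)) := le_csSup hbdd ⟨x, rfl⟩
    simp only [hF] at this ⊢
    linarith
  · -- least upper bound
    intro b hb
    by_contra hcon
    push_neg at hcon
    obtain ⟨v, β, hmin, hclose⟩ :=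
      exists_minorant g hconv hlsc x (g x - b) (by linarith)
    set w := sortDesc v with hwdef
    obtain ⟨σ, hσ⟩ := sortDesc_perm v
    -- F w is bounded above by β
    have hFwβ : ∀ y, F w y ≤ β := by
      intro y
      obtain ⟨τ, hτ⟩ := sortDesc_perm y
      have key : ∑ i, w i * sortDesc y i = ∑ j, v j * (y ∘ (σ⁻¹.trans τ)) j := by
        rw [← Equiv.sum_comp σ (fun j => v j * (y ∘ (σ⁻¹.trans τ)) j)]
        refine Finset.sum_congr rfl fun i _ => ?_
        rw [hwdef, hσ, hτ]
        simp [Equiv.trans]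
      have hgy : g (y ∘ (σ⁻¹.trans τ)) = g y := hsym y _
      have := hmin (y ∘ (σ⁻¹.trans τ))
      simp only [hF]
      rw [key]
      linarith
    have hbdd : BddAbove (Set.range (F w)) := ⟨β, by rintro r ⟨y, rfl⟩; exact hFwβ y⟩
    have hαβ : sSup (Set.range (F w)) ≤ β :=
      csSup_le ⟨F w x, ⟨x, rfl⟩⟩ (by rintro r ⟨y, rfl⟩; exact hFwβ y)
    have hmem : ((∑ i, w i * sortDesc x i) - sSup (Set.range (F w))) ∈
        {t : ℝ | ∃ v ∈ {w | Antitone w ∧ BddAbove (Set.range (F w))},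
          t = (∑ i, v i * sortDesc x i) - sSup (Set.range (F v))} :=
      ⟨w, ⟨hwdef ▸ sortDesc_antitone v, hbdd⟩, rfl⟩
    have hle := hb hmem
    have hrearr : ∑ i, v i * x i ≤ ∑ i, w i * sortDesc x i := sum_mul_le_sortDesc v x
    -- g x - (g x - b) < ∑ v x - β ≤ ∑ w x̄ - sSup ≤ b
    linarith
end
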